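/- For q = exp(iπ/p), the left adjoint action of F(r) on the vector V^j_{s,0} in the Yetter–Drinfeld module V^j is F(r) ▷ V^j_{s,0} = [r+s choose r]_{q²} · ∏_{a=s}^{s+r-1}(1 - q^{2a-2j}) · V^j_{r+s,0}. -/

import Mathlib

/-!
On `V^j_{s,0}` the two contributions of `F ▷ -` landing in `V^j_{s,1}` cancel exactly, so
`F ▷ V^j_{s,0} = [s+1](1 - q^{2s-2j}) V^j_{s+1,0}` and iterating gives
`F^r ▷ V^j_{s,0} = ∏_{a=s}^{s+r-1} [a+1](1 - q^{2a-2j}) V^j_{r+s,0}`.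
It remains to see `[s+1]⋯[s+r] = [r]! [r+s choose r]`, an identity between polynomials in `q²`
that follows from the q-Pascal rule by induction once `[n]` is written as the geometric sum
`1 + q² + ⋯ + q^{2(n-1)}`.
-/

/-- `q = exp(iπ/p)`. -/
noncomputable def qRoot (p : ℕ) : ℂ := Complex.exp (Real.pi * Complex.I / p)

/-- The q-integer `[n] = (q^{2n} - 1)/(q² - 1)`. -/
noncomputable def brQ (p : ℕ) (n : ℕ) : ℂ :=
  ((qRoot p) ^ (2 * n) - 1) / ((qRoot p) ^ 2 - 1)

/-- The q-factorial `[r]! = [1][2]⋯[r]`. -/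
noncomputable def qfact (p : ℕ) : ℕ → ℂ
  | 0 => 1
  | n + 1 => qfact p n * brQ p (n + 1)

/-- The Gaussian binomial coefficient `[n choose k]_t` via the q-Pascal recursion. -/
def qChoose {R : Type*} [CommRing R] (q : R) : ℕ → ℕ → R
  | _, 0 => 1
  | 0, _ + 1 => 0
  | n + 1, k + 1 => qChoose q n k + q ^ (k + 1) * qChoose q n (k + 1)

/- The Hopf bimodule `⊕ (s;Y;t)` is modelled as the space with basis `V^j_{s,t}`,
`(s,t) ∈ ℕ × ℕ`, i.e. `(ℕ × ℕ) →₀ ℂ`.  The left action of `F` is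
`F·V^j_{s,t} = [s+1]V^j_{s+1,t} + q^{2s-j}[t+1]V^j_{s,t+1}`, the right action is
`V^j_{s,t}·F = q^{2t-j}[s+1]V^j_{s+1,t} + [t+1]V^j_{s,t+1}`, and the left adjoint action
of `F` is `F ▷ v = F·v - q^{2(s+t)-j} (v·F)` (the braiding factor for `F` travelling past
`V^j_{s,t}` being `q^{2(s+t)-j}`). -/

/-- The left adjoint action of `F` on the Hopf bimodule with basis `V^j_{s,t}`. -/
noncomputable def adF (p : ℕ) (j : ℤ) : Module.End ℂ ((ℕ × ℕ) →₀ ℂ) :=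
  Finsupp.lsum ℂ fun st =>
    LinearMap.toSpanSingleton ℂ _
      ((brQ p (st.1 + 1) • Finsupp.single (st.1 + 1, st.2) (1 : ℂ)
          + ((qRoot p) ^ (2 * (st.1 : ℤ) - j) * brQ p (st.2 + 1)) •
              Finsupp.single (st.1, st.2 + 1) (1 : ℂ))
        - (qRoot p) ^ (2 * ((st.1 : ℤ) + (st.2 : ℤ)) - j) •
            (((qRoot p) ^ (2 * (st.2 : ℤ) - j) * brQ p (st.1 + 1)) •
                Finsupp.single (st.1 + 1, st.2) (1 : ℂ)
              + brQ p (st.2 + 1) • Finsupp.single (st.1, st.2 + 1) (1 : ℂ)))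

open Finset

section GaussianBinomial

variable {R : Type*} [CommRing R] (t : R)

theorem qChoose_zero_right (n : ℕ) : qChoose t n 0 = 1 := by
  cases n <;> rfl

theorem qChoose_succ_succ (n k : ℕ) :
    qChoose t (n + 1) (k + 1) = qChoose t n k + t ^ (k + 1) * qChoose t n (k + 1) := rfl

theorem qChoose_eq_zero_of_lt : ∀ {n k : ℕ}, n < k → qChoose t n k = 0
  | 0, _ + 1, _ => rfl
  | n + 1, k + 1, h => by
    rw [qChoose_succ_succ, qChoose_eq_zero_of_lt (by omega), qChoose_eq_zero_of_lt (by omega)]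
    ring

theorem qChoose_self : ∀ n : ℕ, qChoose t n n = 1
  | 0 => rfl
  | n + 1 => by rw [qChoose_succ_succ, qChoose_self n, qChoose_eq_zero_of_lt t (by omega)]; ring

theorem geom_sum_succ_add_pow_mul_geom_sum (r s : ℕ) :
    ∑ i ∈ range (r + 1), t ^ i + t ^ (r + 1) * ∑ i ∈ range (s + 1), t ^ i
      = ∑ i ∈ range (s + 1 + r + 1), t ^ i := by
  rw [show s + 1 + r + 1 = (r + 1) + (s + 1) by omega,
    sum_range_add (fun i => t ^ i) (r + 1) (s + 1), mul_sum]
  simp_rw [← pow_add]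

theorem prod_geom_sum_mul_qChoose (r s : ℕ) :
    (∏ i ∈ range r, ∑ k ∈ range (i + 1), t ^ k) * qChoose t (r + s) r
      = ∏ a ∈ Ico s (s + r), ∑ k ∈ range (a + 1), t ^ k := by
  induction r generalizing s with
  | zero => simp [qChoose_zero_right]
  | succ r ihr =>
    induction s with
    | zero => rw [Nat.add_zero, zero_add, qChoose_self, mul_one, range_eq_Ico]
    | succ s ihs =>
      have hr := ihr (s + 1)
      rw [show r + 1 + s = r + (s + 1) by omega] at ihs
      rw [show r + 1 + (s + 1) = r + (s + 1) + 1 by omega, qChoose_succ_succ,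
        show s + 1 + (r + 1) = s + 1 + r + 1 by omega, prod_Ico_succ_top (by omega),
        ← geom_sum_succ_add_pow_mul_geom_sum t r s]
      rw [prod_eq_prod_Ico_succ_bot (by omega), show s + (r + 1) = s + 1 + r by omega] at ihs
      rw [prod_range_succ] at ihs ⊢
      linear_combination (∑ k ∈ range (r + 1), t ^ k) * hr + t ^ (r + 1) * ihs

end GaussianBinomial

theorem qRoot_ne_zero (p : ℕ) : qRoot p ≠ 0 := Complex.exp_ne_zero _

theorem qRoot_sq_ne_one {p : ℕ} (hp : 2 ≤ p) : qRoot p ^ 2 ≠ 1 := by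
  have hq : qRoot p ^ 2 = Complex.exp (2 * Real.pi * Complex.I / p) := by
    rw [qRoot, ← Complex.exp_nat_mul]
    ring_nf
  rw [hq, ← pow_one (Complex.exp _)]
  exact (Complex.isPrimitiveRoot_exp p (by omega)).pow_ne_one_of_pos_of_lt one_ne_zero (by omega)

theorem brQ_eq_geom_sum {p : ℕ} (hp : 2 ≤ p) (n : ℕ) :
    brQ p n = ∑ i ∈ range n, (qRoot p ^ 2) ^ i := by
  rw [geom_sum_eq (qRoot_sq_ne_one hp), brQ, pow_mul]

theorem qfact_eq_prod_brQ (p r : ℕ) : qfact p r = ∏ i ∈ range r, brQ p (i + 1) := by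
  induction r with
  | zero => rfl
  | succ r ih => rw [qfact, ih, prod_range_succ]

theorem qfact_mul_qChoose {p : ℕ} (hp : 2 ≤ p) (r s : ℕ) :
    qfact p r * qChoose (qRoot p ^ 2) (r + s) r = ∏ a ∈ Ico s (s + r), brQ p (a + 1) := by
  simp only [qfact_eq_prod_brQ, brQ_eq_geom_sum hp]
  exact prod_geom_sum_mul_qChoose _ r s

theorem adF_single_mk_zero (p : ℕ) (j : ℤ) (s : ℕ) :
    adF p j (Finsupp.single (s, 0) 1)
      = (brQ p (s + 1) * (1 - qRoot p ^ (2 * (s : ℤ) - 2 * j))) • Finsupp.single (s + 1, 0) 1 := by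
  have hbraid : qRoot p ^ (2 * (s : ℤ) - j) * qRoot p ^ (-j) = qRoot p ^ (2 * (s : ℤ) - 2 * j) := by
    rw [← zpow_add₀ (qRoot_ne_zero p)]
    ring_nf
  rw [adF, Finsupp.lsum_single, LinearMap.toSpanSingleton_apply, one_smul]
  simp only [Nat.cast_zero, add_zero, mul_zero, zero_sub, smul_add, smul_smul]
  rw [← mul_assoc, hbraid]
  module

theorem adF_pow_single_mk_zero (p : ℕ) (j : ℤ) (r s : ℕ) :
    (adF p j ^ r) (Finsupp.single (s, 0) 1)
      = (∏ a ∈ Ico s (s + r), brQ p (a + 1) * (1 - qRoot p ^ (2 * (a : ℤ) - 2 * j)))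
          • Finsupp.single (r + s, 0) 1 := by
  induction r generalizing s with
  | zero => simp
  | succ r ih =>
    rw [pow_succ, Module.End.mul_apply, adF_single_mk_zero, map_smul, ih, smul_smul,
      prod_eq_prod_Ico_succ_bot (by omega : s < s + (r + 1)),
      show s + (r + 1) = s + 1 + r by omega, show r + 1 + s = r + (s + 1) by omega]

/-- Multiplied through by `[r]!`: the left side is `F^r ▷ V^j_{s,0}` with `F^r = [r]! F(r)`. -/
theorem adjoint_action_closed_formula (p : ℕ) (hp : 2 ≤ p) (j : ℤ) (r s : ℕ) :
    (adF p j ^ r) (Finsupp.single (s, 0) (1 : ℂ))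
      = (qfact p r * qChoose ((qRoot p) ^ 2) (r + s) r
            * ∏ a ∈ Finset.Ico s (s + r), (1 - (qRoot p) ^ (2 * (a : ℤ) - 2 * j)))
          • Finsupp.single (r + s, 0) (1 : ℂ) := by
  rw [adF_pow_single_mk_zero, prod_mul_distrib, qfact_mul_qChoose hp]
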